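/- Let α > 0, let μ : ℝ → ℝ be continuous and nonnegative, let b₁ > 0 be a constant, and let φ : [0,∞) → ℝ be bounded on (0,α]. Let n be the explicit characteristic solution of the McKendrick equation with boundary condition n(0,t) = b₁·n(α,t) and initial data φ. Set r = b₁·exp(−∫₀^α μ(s) ds), and for t ≥ a set m(a,t) = ⌊(t−a)/α⌋ + 1, ε(a,t) = (t−a)/α + 1 − m(a,t), and χ(a,t) = exp(−∫_{α−α·ε(a,t)}^{α} μ(s) ds). Then for every fixed a ≥ 0 and every t ≥ a: n(a,t)·r^{−m(a,t)} = χ(a,t)·φ(α − α·ε(a,t))·exp(−∫_α^a μ(s) ds), and the map t ↦ n(a,t)·r^{−m(a,t)} is periodic with period α on [a,∞). -/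
import Mathlib


open MeasureTheory Real Set Filter

/-- Theorem 2.6: with `r = b₁·exp(−∫₀^α μ)`,
`m(a,t) = ⌊(t−a)/α⌋+1`, `ε(a,t) = (t−a)/α + 1 − m(a,t)` and
`χ(a,t) = exp(−∫_{α−αε(a,t)}^α μ(s) ds)`, the normalized solution satisfies
`n(a,t)·r^{−m(a,t)} = χ(a,t)·φ(α−αε(a,t))·exp(−∫_α^a μ)` for `t ≥ a`, and
`t ↦ n(a,t)·r^{−m(a,t)}` is periodic with period `α` on `[a,∞)`. -/
theorem mckendrick_one_age_class_periodic_modulation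
    (α : ℝ) (hα : 0 < α)
    (μ : ℝ → ℝ) (hμc : Continuous μ) (hμ0 : ∀ x, 0 ≤ μ x)
    (b₁ : ℝ) (hb₁ : 0 < b₁)
    (φ : ℝ → ℝ)
    (hφbd : ∃ M : ℝ, ∀ a ∈ Set.Ioc (0:ℝ) α, |φ a| ≤ M)
    (n : ℝ → ℝ → ℝ)
    (hn₁ : ∀ a t : ℝ, 0 ≤ t → t < a →
      n a t = φ (a - t) * Real.exp (-(∫ s in (0:ℝ)..t, μ (s + a - t))))
    (hn₂ : ∀ a t : ℝ, 0 ≤ a → a ≤ t →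
      ∀ m : ℕ, (m : ℤ) = ⌊(t - a) / α⌋ + 1 →
      n a t = b₁ ^ m * φ ((m : ℝ) * α + a - t) *
        Real.exp (-(∫ s in (0:ℝ)..(t - a - ((m : ℝ) - 1) * α),
          μ (s + (m : ℝ) * α + a - t))) *
        Real.exp (-(((m : ℝ) - 1) * ∫ s in (0:ℝ)..α, μ s)) *
        Real.exp (-(∫ s in (0:ℝ)..a, μ s)))
    (r : ℝ) (hr : r = b₁ * Real.exp (-(∫ s in (0:ℝ)..α, μ s)))
    (mm : ℝ → ℝ → ℤ) (hmm : ∀ a t, mm a t = ⌊(t - a) / α⌋ + 1)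
    (ε : ℝ → ℝ → ℝ) (hε : ∀ a t, ε a t = (t - a) / α + 1 - (mm a t : ℝ))
    (χ : ℝ → ℝ → ℝ)
    (hχ : ∀ a t, χ a t = Real.exp (-(∫ s in (α - α * ε a t)..α, μ s))) :
    ∀ a : ℝ, 0 ≤ a → ∀ t : ℝ, a ≤ t →
      (n a t * r ^ (-(mm a t)) =
        χ a t * φ (α - α * ε a t) * Real.exp (-(∫ s in α..a, μ s))) ∧
      n a (t + α) * r ^ (-(mm a (t + α))) = n a t * r ^ (-(mm a t)) := by

  intro a ha
  have hint : ∀ x y : ℝ, IntervalIntegrable μ MeasureTheory.volume x y :=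
    fun x y => hμc.intervalIntegrable x y
  have key : ∀ t : ℝ, a ≤ t →
      n a t * r ^ (-(mm a t)) =
        χ a t * φ (α - α * ε a t) * Real.exp (-(∫ s in α..a, μ s)) := by
    intro t ht
    set k : ℤ := ⌊(t - a) / α⌋ with hk
    have hk0 : 0 ≤ k := Int.floor_nonneg.mpr (div_nonneg (by linarith) hα.le)
    set M : ℕ := k.toNat + 1 with hM
    have hMk : (M : ℤ) = k + 1 := by
      simp [hM, Int.toNat_of_nonneg hk0]
    have hMr : (M : ℝ) = (k : ℝ) + 1 := by exact_mod_cast hMk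
    have hnt := hn₂ a t ha ht M (by rw [hMk])
    have hmmM : mm a t = (M : ℤ) := by rw [hmm, ← hk, hMk]
    have hαne : α ≠ 0 := hα.ne'
    have hεv : α * ε a t = t - a - (k : ℝ) * α := by
      have hMr' : ((M : ℤ) : ℝ) = (k : ℝ) + 1 := by exact_mod_cast hMk
      rw [hε, hmmM, hMr']
      field_simp
      ring
    have h1 : (M : ℝ) * α + a - t = α - α * ε a t := by rw [hεv, hMr]; ring
    have h2 : t - a - ((M : ℝ) - 1) * α = α * ε a t := by rw [hεv, hMr]; ring
    have h3 : (∫ s in (0:ℝ)..(t - a - ((M : ℝ) - 1) * α),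
        μ (s + (M : ℝ) * α + a - t)) = ∫ s in (α - α * ε a t)..α, μ s := by
      have hfun : ∀ s : ℝ, s + (M : ℝ) * α + a - t = s + ((M : ℝ) * α + a - t) :=
        fun s => by ring
      simp only [hfun]
      rw [h2, intervalIntegral.integral_comp_add_right]
      congr 1 <;> linarith [h1]
    have h4 : (∫ s in α..a, μ s) =
        (∫ s in (0:ℝ)..a, μ s) - (∫ s in (0:ℝ)..α, μ s) :=
      (intervalIntegral.integral_interval_sub_left (hint 0 a) (hint 0 α)).symm
    have hbM : (b₁ : ℝ) ^ M ≠ 0 := pow_ne_zero _ hb₁.ne'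
    have hrpow : r ^ (-(M : ℤ)) =
        (b₁ ^ M)⁻¹ * Real.exp ((M : ℝ) * (∫ s in (0:ℝ)..α, μ s)) := by
      rw [hr, zpow_neg, zpow_natCast, mul_pow, ← Real.exp_nat_mul, mul_inv,
        ← Real.exp_neg]
      ring_nf
    rw [hnt, hmmM, hrpow, h3, h1, hχ, h4]
    have hexp : Real.exp (-(((M : ℝ) - 1) * ∫ s in (0:ℝ)..α, μ s)) *
        Real.exp ((M : ℝ) * (∫ s in (0:ℝ)..α, μ s)) =
        Real.exp (∫ s in (0:ℝ)..α, μ s) := by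
      rw [← Real.exp_add]; congr 1; ring
    have hexp2 : Real.exp (-((∫ s in (0:ℝ)..a, μ s) - (∫ s in (0:ℝ)..α, μ s))) =
        Real.exp (-(∫ s in (0:ℝ)..a, μ s)) * Real.exp (∫ s in (0:ℝ)..α, μ s) := by
      rw [← Real.exp_add]; congr 1; ring
    rw [hexp2]
    calc b₁ ^ M * φ (α - α * ε a t) * Real.exp (-(∫ s in (α - α * ε a t)..α, μ s)) *
          Real.exp (-(((M : ℝ) - 1) * ∫ s in (0:ℝ)..α, μ s)) *
          Real.exp (-(∫ s in (0:ℝ)..a, μ s)) *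
          ((b₁ ^ M)⁻¹ * Real.exp ((M : ℝ) * (∫ s in (0:ℝ)..α, μ s)))
        = (b₁ ^ M * (b₁ ^ M)⁻¹) * (φ (α - α * ε a t) *
            Real.exp (-(∫ s in (α - α * ε a t)..α, μ s)) *
            Real.exp (-(∫ s in (0:ℝ)..a, μ s)) *
            (Real.exp (-(((M : ℝ) - 1) * ∫ s in (0:ℝ)..α, μ s)) *
             Real.exp ((M : ℝ) * (∫ s in (0:ℝ)..α, μ s)))) := by ring
      _ = Real.exp (-(∫ s in (α - α * ε a t)..α, μ s)) * φ (α - α * ε a t) *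
            (Real.exp (-(∫ s in (0:ℝ)..a, μ s)) *
             Real.exp (∫ s in (0:ℝ)..α, μ s)) := by
          rw [mul_inv_cancel₀ hbM, hexp]; ring
  intro t ht
  refine ⟨key t ht, ?_⟩
  have ht' : a ≤ t + α := by linarith
  have hfloor : ⌊(t + α - a) / α⌋ = ⌊(t - a) / α⌋ + 1 := by
    rw [show (t + α - a) / α = (t - a) / α + 1 by field_simp; ring]
    exact Int.floor_add_one _
  have hεeq : ε a (t + α) = ε a t := by
    rw [hε, hε, hmm, hmm, hfloor]
    push_cast
    field_simp
    ring
  rw [key t ht, key (t + α) ht', hχ, hχ, hεeq]
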